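/- Let X1, X2 be spectral spaces. If Ψ : 𝒳(X1) → 𝒳(X2) is a homeomorphism, then there exists a unique homeomorphism ψ : X1 → X2 such that Ψ = 𝒳(ψ), where 𝒳(ψ)(C) := ψ(C)^gen for C ∈ 𝒳(X1); in particular, Ψ ∘ φ1 = φ2 ∘ ψ for the canonical embeddings φ1, φ2. -/

import Mathlib

open Set TopologicalSpace Topology

/-- A subset of a topological space is *inverse-closed* if it is an intersection of a
family of quasi-compact open subsets. -/
def InvClosed {X : Type*} [TopologicalSpace X] (Y : Set X) : Prop :=
  ∃ 𝒪 : Set (Set X), (∀ U ∈ 𝒪, IsOpen U ∧ IsCompact U) ∧ Y = ⋂₀ 𝒪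

/-- A subset is *saturated* if it is an intersection of open sets. -/
def IsSatd {X : Type*} [TopologicalSpace X] (Y : Set X) : Prop :=
  ∃ 𝒪 : Set (Set X), (∀ U ∈ 𝒪, IsOpen U) ∧ Y = ⋂₀ 𝒪

/-- A topological space is *spectral* if it is T0, quasi-compact, sober, and the
quasi-compact open subsets form a basis closed under finite intersections. -/
def IsSpectralSpace (X : Type*) [TopologicalSpace X] : Prop :=
  T0Space X ∧ CompactSpace X ∧ QuasiSober X ∧
    IsTopologicalBasis {U : Set X | IsOpen U ∧ IsCompact U} ∧
    ∀ U V : Set X, IsOpen U → IsCompact U → IsOpen V → IsCompact V → IsCompact (U ∩ V)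

/-- `𝒳(X)`: the nonempty inverse-closed subsets of `X`. -/
abbrev XCal (X : Type*) [TopologicalSpace X] : Type _ :=
  {Y : Set X // Y.Nonempty ∧ InvClosed Y}

/-- The Zariski topology on `𝒳(X)`, with basic open sets `𝒰(Ω) = {Y : Y ⊆ Ω}` for `Ω`
quasi-compact open in `X`. -/
instance XCal.instTop (X : Type*) [TopologicalSpace X] : TopologicalSpace (XCal X) :=
  generateFrom {S : Set (XCal X) | ∃ Ω : Set X, IsOpen Ω ∧ IsCompact Ω ∧
    S = {Y : XCal X | (Y : Set X) ⊆ Ω}}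

/-- The specialization-type order: `x ≤ y` iff `y ∈ closure {x}`. -/
def spord {X : Type*} [TopologicalSpace X] (x y : X) : Prop := y ∈ closure {x}

/-- Closure under generizations of a set `S`: all points `z ≤ s` for some `s ∈ S`. -/
def genOf {X : Type*} [TopologicalSpace X] (S : Set X) : Set X :=
  {z : X | ∃ s ∈ S, spord z s}

/-- A map is *spectral* if preimages of quasi-compact open sets are quasi-compact open. -/
def SpecMap {X Y : Type*} [TopologicalSpace X] [TopologicalSpace Y] (f : X → Y) : Prop :=
  ∀ Ω : Set Y, IsOpen Ω → IsCompact Ω → IsOpen (f ⁻¹' Ω) ∧ IsCompact (f ⁻¹' Ω)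

/-- The constructible topology on a spectral space: generated by the quasi-compact open
sets together with their complements. -/
def constructibleTop (X : Type*) [TopologicalSpace X] : TopologicalSpace X :=
  generateFrom ({U : Set X | IsOpen U ∧ IsCompact U} ∪
    {S : Set X | ∃ U : Set X, IsOpen U ∧ IsCompact U ∧ S = Uᶜ})

/-- `s` is the supremum of `S` for the order induced by the topology. -/
def IsSupOf {X : Type*} [TopologicalSpace X] (S : Set X) (s : X) : Prop :=
  (∀ c ∈ S, spord c s) ∧ ∀ t : X, (∀ c ∈ S, spord c t) → spord s t

/-- A map is sup-preserving if it sends existing finite suprema to suprema. -/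
def SupPreserving {X Y : Type*} [TopologicalSpace X] [TopologicalSpace Y] (f : X → Y) : Prop :=
  ∀ F : Set X, F.Finite → ∀ s : X, IsSupOf F s → IsSupOf (f '' F) (f s)

/-- A map is open onto its image. -/
def OpenOntoImage {X Y : Type*} [TopologicalSpace X] [TopologicalSpace Y] (f : X → Y) : Prop :=
  ∀ V : Set X, IsOpen V → ∃ W : Set Y, IsOpen W ∧ f '' V = W ∩ Set.range f

/-!
In the Zariski topology of `𝒳(X)` the specialization order is inclusion, so a homeomorphism
`Ψ : 𝒳(X₁) → 𝒳(X₂)` is an order isomorphism, and it preserves the elements `C` such that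
`C ⊆ D ∪ E` forces `C ⊆ D` or `C ⊆ E`. In a spectral space these are exactly the sets
`{x}^gen`: such a `C` is quasi-compact, so if every point of `C` had a quasi-compact open
neighbourhood not containing `C`, finitely many of them would cover `C`, against primality; a
point all of whose quasi-compact open neighbourhoods contain `C` is the maximum of `C`. Since
`φ` is a topological embedding, `Ψ` restricts to a homeomorphism between the images of `φ₁` and
`φ₂`, which is `ψ`; every `C` is the union of the `φ(x)` with `x ∈ C`, whence `Ψ = 𝒳(ψ)`, and
uniqueness comes from the injectivity of `φ₂`.
-/

lemma IsSpectralSpace.spectralSpace {X : Type*} [TopologicalSpace X] (h : IsSpectralSpace X) :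
    SpectralSpace X :=
  let ⟨hT0, hcompact, hsober, hbasis, hinter⟩ := h
  { toT0Space := hT0, toCompactSpace := hcompact, toQuasiSober := hsober,
    toQuasiSeparatedSpace := ⟨hinter⟩, toPrespectralSpace := ⟨hbasis⟩ }

section Generization

variable {X : Type*} [TopologicalSpace X]

lemma spord_iff_specializes {x y : X} : spord x y ↔ x ⤳ y :=
  specializes_iff_mem_closure.symm

lemma mem_genOf_singleton {x z : X} : z ∈ genOf {x} ↔ z ⤳ x := by
  simp [genOf, spord_iff_specializes]

lemma subset_genOf (S : Set X) : S ⊆ genOf S :=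
  fun s hs => ⟨s, hs, spord_iff_specializes.2 specializes_rfl⟩

end Generization

lemma isClosed_constructibleTopology {X : Type*} [TopologicalSpace X] {U : Set X}
    (hU : IsOpen U) (hU' : IsCompact U) : IsClosed[constructibleTopology X] U := by
  refine @IsClosed.mk X (constructibleTopology X) U ?_
  apply IsCompact.isOpen_constructibleTopology_of_isClosed
  · simpa using hU'
  · exact hU.isClosed_compl

namespace InvClosed

variable {X : Type*} [TopologicalSpace X] {C D : Set X}

lemma of_isOpen_of_isCompact (hC : IsOpen C) (hC' : IsCompact C) : InvClosed C :=
  ⟨{C}, by simpa using ⟨hC, hC'⟩, (sInter_singleton C).symm⟩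

lemma union (hC : InvClosed C) (hD : InvClosed D) : InvClosed (C ∪ D) := by
  obtain ⟨𝒪, h𝒪, rfl⟩ := hC
  obtain ⟨𝒬, h𝒬, rfl⟩ := hD
  refine ⟨image2 (· ∪ ·) 𝒪 𝒬, ?_, ?_⟩
  · rintro _ ⟨U, hU, V, hV, rfl⟩
    exact ⟨(h𝒪 U hU).1.union (h𝒬 V hV).1, (h𝒪 U hU).2.union (h𝒬 V hV).2⟩
  · ext x
    simp only [sInter_image2, mem_union, mem_sInter, mem_iInter]
    grind

lemma mem_of_specializes (hC : InvClosed C) {c z : X} (h : z ⤳ c) (hc : c ∈ C) : z ∈ C := by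
  obtain ⟨𝒪, h𝒪, rfl⟩ := hC
  exact fun U hU => h.mem_open (h𝒪 U hU).1 (hc U hU)

lemma genOf_eq (hC : InvClosed C) : genOf C = C :=
  Subset.antisymm (fun _ ⟨_, hc, hzc⟩ => hC.mem_of_specializes (spord_iff_specializes.1 hzc) hc)
    (subset_genOf C)

/-- Compact opens are clopen in the constructible topology, which is compact. -/
lemma isCompact [CompactSpace X] [QuasiSober X] [PrespectralSpace X] [QuasiSeparatedSpace X]
    (hC : InvClosed C) : IsCompact C := by
  obtain ⟨𝒪, h𝒪, rfl⟩ := hC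
  have hclosed : IsClosed[constructibleTopology X] (⋂₀ 𝒪) :=
    @isClosed_sInter X (constructibleTopology X) 𝒪 fun U hU =>
      isClosed_constructibleTopology (h𝒪 U hU).1 (h𝒪 U hU).2
  have hle : constructibleTopology X ≤ ‹TopologicalSpace X› :=
    (le_generateFrom fun U hU => hU.2.isOpen_constructibleTopology_of_isOpen hU.1).trans_eq
      PrespectralSpace.isTopologicalBasis.eq_generateFrom.symm
  have hcont : Continuous (WithTopology.ofTopology : WithConstructibleTopology X → X) :=
    ⟨fun s hs => hle s hs⟩
  have hcompact : IsCompact (WithTopology.ofTopology ⁻¹' ⋂₀ 𝒪 :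
      Set (WithConstructibleTopology X)) :=
    (WithConstructibleTopology.isClosed_iff (s := WithTopology.ofTopology ⁻¹' ⋂₀ 𝒪)).2
      hclosed |>.isCompact
  have := hcompact.image hcont
  rwa [image_preimage_eq _ (WithTopology.ofTopology_surjective _)] at this

end InvClosed

/-- Mathlib's `SupPrime` also asks `a` not to be minimal, which fails for `XCal.ofPoint x` when
`x` has no proper generization. -/
def WeakSupPrime {α : Type*} [SemilatticeSup α] (a : α) : Prop :=
  ∀ ⦃b c : α⦄, a ≤ b ⊔ c → a ≤ b ∨ a ≤ c

lemma WeakSupPrime.map_orderIso {α β : Type*} [SemilatticeSup α] [SemilatticeSup β]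
    (e : α ≃o β) {a : α} (ha : WeakSupPrime a) : WeakSupPrime (e a) := by
  intro b c h
  have := @ha (e.symm b) (e.symm c) (by rwa [← e.le_iff_le, e.map_sup, e.apply_symm_apply,
    e.apply_symm_apply])
  exact this.imp (fun h => by simpa using e.monotone h) (fun h => by simpa using e.monotone h)

lemma Topology.IsEmbedding.exists_homeomorph_of_image_range_eq {X₁ X₂ Y₁ Y₂ : Type*}
    [TopologicalSpace X₁] [TopologicalSpace X₂] [TopologicalSpace Y₁] [TopologicalSpace Y₂]
    {f₁ : X₁ → Y₁} {f₂ : X₂ → Y₂} (hf₁ : IsEmbedding f₁) (hf₂ : IsEmbedding f₂) (e : Y₁ ≃ₜ Y₂)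
    (he : e '' range f₁ = range f₂) : ∃ ψ : X₁ ≃ₜ X₂, ∀ x, f₂ (ψ x) = e (f₁ x) := by
  refine ⟨hf₁.toHomeomorph.trans ((e.image _).trans
    ((Homeomorph.setCongr he).trans hf₂.toHomeomorph.symm)), fun x => ?_⟩
  exact congrArg Subtype.val (hf₂.toHomeomorph.apply_symm_apply _)

namespace XCal

variable {X : Type*} [TopologicalSpace X]

instance : SemilatticeSup (XCal X) :=
  Subtype.semilatticeSup fun _ _ hC hD => ⟨hC.1.inl, hC.2.union hD.2⟩

lemma isLowerSet_of_isOpen {s : Set (XCal X)} (hs : IsOpen s) : IsLowerSet s := by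
  have : Topology.lowerSet (XCal X) ≤ XCal.instTop X :=
    le_generateFrom (by rintro _ ⟨Ω, -, -, rfl⟩ C D hDC hC; exact Subset.trans hDC hC)
  exact this s hs

lemma isOpen_setOf_subset {Ω : Set X} (hΩ : IsOpen Ω) (hΩ' : IsCompact Ω) :
    IsOpen {C : XCal X | (C : Set X) ⊆ Ω} :=
  isOpen_generateFrom_of_mem ⟨Ω, hΩ, hΩ', rfl⟩

lemma specializes_iff_le {C D : XCal X} : C ⤳ D ↔ C ≤ D := by
  refine ⟨fun h => ?_, fun h => specializes_iff_forall_open.2 fun s hs => isLowerSet_of_isOpen hs h⟩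
  obtain ⟨𝒪, h𝒪, hD⟩ := D.2.2
  change (C : Set X) ⊆ D
  rw [hD]
  exact subset_sInter fun U hU => h.mem_open (isOpen_setOf_subset (h𝒪 U hU).1 (h𝒪 U hU).2)
    (hD ▸ sInter_subset_of_mem hU : (D : Set X) ⊆ U)

variable {X₁ X₂ : Type*} [TopologicalSpace X₁] [TopologicalSpace X₂]

def orderIsoOfHomeomorph (e : XCal X₁ ≃ₜ XCal X₂) : XCal X₁ ≃o XCal X₂ where
  toEquiv := e.toEquiv
  map_rel_iff' := by
    simp only [← specializes_iff_le]
    exact e.isInducing.specializes_iff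

section Points

variable [PrespectralSpace X]

lemma invClosed_genOf_singleton (x : X) : InvClosed (genOf {x}) := by
  refine ⟨{U | (IsOpen U ∧ IsCompact U) ∧ x ∈ U}, fun U hU => hU.1, ?_⟩
  ext z
  simp only [mem_genOf_singleton, mem_sInter, mem_ofPred_eq, and_imp]
  refine ⟨fun h U hU _ hxU => h.mem_open hU hxU, fun h => specializes_iff_forall_open.2 ?_⟩
  intro s hs hxs
  obtain ⟨U, hU, hxU, hUs⟩ := PrespectralSpace.isTopologicalBasis.exists_subset_of_mem_open hxs hs
  exact hUs (h U hU.1 hU.2 hxU)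

def ofPoint (x : X) : XCal X :=
  ⟨genOf {x}, ⟨x, mem_genOf_singleton.2 specializes_rfl⟩, invClosed_genOf_singleton x⟩

lemma coe_ofPoint (x : X) : (ofPoint x : Set X) = genOf {x} := rfl

lemma ofPoint_le_iff {x : X} {C : XCal X} : ofPoint x ≤ C ↔ x ∈ (C : Set X) :=
  ⟨fun h => h (mem_genOf_singleton.2 specializes_rfl),
    fun h _ hz => C.2.2.mem_of_specializes (mem_genOf_singleton.1 hz) h⟩

lemma preimage_ofPoint_setOf_subset {Ω : Set X} (hΩ : IsOpen Ω) :
    ofPoint ⁻¹' {C : XCal X | (C : Set X) ⊆ Ω} = Ω :=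
  Set.ext fun _ => ⟨fun h => h (mem_genOf_singleton.2 specializes_rfl),
    fun h _ hz => (mem_genOf_singleton.1 hz).mem_open hΩ h⟩

lemma continuous_ofPoint : Continuous (ofPoint : X → XCal X) := by
  refine continuous_generateFrom_iff.2 ?_
  rintro _ ⟨Ω, hΩ, -, rfl⟩
  rw [preimage_ofPoint_setOf_subset hΩ]
  exact hΩ

lemma isInducing_ofPoint : IsInducing (ofPoint : X → XCal X) := by
  refine ⟨le_antisymm (continuous_iff_le_induced.1 continuous_ofPoint) fun s hs => ?_⟩
  rw [PrespectralSpace.isTopologicalBasis.open_eq_sUnion' hs]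
  refine @isOpen_sUnion _ (induced _ _) _ fun U hU => ?_
  rw [← preimage_ofPoint_setOf_subset hU.1.1]
  exact isOpen_induced (isOpen_setOf_subset hU.1.1 hU.1.2)

lemma isEmbedding_ofPoint [T0Space X] : IsEmbedding (ofPoint : X → XCal X) := by
  refine ⟨isInducing_ofPoint, fun x y h => ?_⟩
  have hxy : x ⤳ y := mem_genOf_singleton.1 (ofPoint_le_iff.1 h.le)
  have hyx : y ⤳ x := mem_genOf_singleton.1 (ofPoint_le_iff.1 h.ge)
  exact (hxy.antisymm hyx).eq

lemma weakSupPrime_ofPoint (x : X) : WeakSupPrime (ofPoint x) :=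
  fun _ _ h => by
    rw [ofPoint_le_iff, ofPoint_le_iff]
    exact ofPoint_le_iff.1 h

end Points

lemma _root_.WeakSupPrime.subset_or_subset {C : XCal X} (hC : WeakSupPrime C) {D E : Set X}
    (hD : InvClosed D) (hE : InvClosed E) (h : (C : Set X) ⊆ D ∪ E) :
    (C : Set X) ⊆ D ∨ (C : Set X) ⊆ E := by
  rcases D.eq_empty_or_nonempty with rfl | hDne
  · exact Or.inr (by simpa using h)
  rcases E.eq_empty_or_nonempty with rfl | hEne
  · exact Or.inl (by simpa using h)
  exact @hC ⟨D, hDne, hD⟩ ⟨E, hEne, hE⟩ h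

lemma _root_.WeakSupPrime.exists_subset_of_subset_iUnion {C : XCal X} (hC : WeakSupPrime C)
    {ι : Type*} {B : ι → Set X} (hB : ∀ i, IsOpen (B i) ∧ IsCompact (B i)) (t : Finset ι)
    (h : (C : Set X) ⊆ ⋃ i ∈ t, B i) : ∃ i ∈ t, (C : Set X) ⊆ B i := by
  classical
  induction t using Finset.induction_on with
  | empty => obtain ⟨x, hx⟩ := C.2.1; simpa using h hx
  | insert a t _ ih =>
    rw [Finset.set_biUnion_insert] at h
    have hrest : InvClosed (⋃ i ∈ t, B i) := .of_isOpen_of_isCompact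
      (isOpen_biUnion fun i _ => (hB i).1) (t.isCompact_biUnion fun i _ => (hB i).2)
    rcases hC.subset_or_subset (.of_isOpen_of_isCompact (hB a).1 (hB a).2) hrest h with ha | ht
    · exact ⟨a, Finset.mem_insert_self a t, ha⟩
    · obtain ⟨i, hi, hCi⟩ := ih ht
      exact ⟨i, Finset.mem_insert_of_mem hi, hCi⟩

lemma _root_.WeakSupPrime.exists_ofPoint_eq [SpectralSpace X] {C : XCal X} (hC : WeakSupPrime C) :
    ∃ x, ofPoint x = C := by
  obtain ⟨x, hxC, hx⟩ : ∃ x ∈ (C : Set X),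
      ∀ U, IsOpen U → IsCompact U → x ∈ U → (C : Set X) ⊆ U := by
    by_contra! h
    let 𝒰 := {U : Set X // IsOpen U ∧ IsCompact U ∧ ¬(C : Set X) ⊆ U}
    obtain ⟨t, ht⟩ := C.2.2.isCompact.elim_finite_subcover (fun U : 𝒰 => (U : Set X))
      (fun U => U.2.1) fun x hx => by
        obtain ⟨U, hU, hU', hxU, hCU⟩ := h x hx
        exact mem_iUnion.2 ⟨⟨U, hU, hU', hCU⟩, hxU⟩
    obtain ⟨U, -, hCU⟩ := hC.exists_subset_of_subset_iUnion (fun U : 𝒰 => ⟨U.2.1, U.2.2.1⟩) t ht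
    exact U.2.2.2 hCU
  refine ⟨x, le_antisymm (ofPoint_le_iff.2 hxC) fun c hc => mem_genOf_singleton.2 ?_⟩
  refine specializes_iff_forall_open.2 fun s hs hxs => ?_
  obtain ⟨U, hU, hxU, hUs⟩ := PrespectralSpace.isTopologicalBasis.exists_subset_of_mem_open hxs hs
  exact hUs (hx U hU.1 hU.2 hxU hc)

lemma range_ofPoint [SpectralSpace X] : range (ofPoint : X → XCal X) = {C | WeakSupPrime C} :=
  Subset.antisymm (range_subset_iff.2 weakSupPrime_ofPoint) fun _ hC => hC.exists_ofPoint_eq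

lemma image_range_ofPoint [SpectralSpace X₁] [SpectralSpace X₂] (e : XCal X₁ ≃ₜ XCal X₂) :
    e '' range ofPoint = range ofPoint := by
  rw [range_ofPoint, range_ofPoint]
  ext C
  refine ⟨?_, fun hC => ⟨e.symm C, hC.map_orderIso (orderIsoOfHomeomorph e.symm),
    e.apply_symm_apply C⟩⟩
  rintro ⟨D, hD, rfl⟩
  exact hD.map_orderIso (orderIsoOfHomeomorph e)

lemma coe_apply_eq_image [PrespectralSpace X₁] [PrespectralSpace X₂] (e : XCal X₁ ≃ₜ XCal X₂)
    (ψ : X₁ ≃ₜ X₂) (hψ : ∀ x, ofPoint (ψ x) = e (ofPoint x)) (C : XCal X₁) :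
    (e C : Set X₂) = ψ '' C := by
  ext y
  calc y ∈ (e C : Set X₂) ↔ ofPoint y ≤ e C := ofPoint_le_iff.symm
    _ ↔ e (ofPoint (ψ.symm y)) ≤ e C := by rw [← hψ, ψ.apply_symm_apply]
    _ ↔ ofPoint (ψ.symm y) ≤ C := (orderIsoOfHomeomorph e).le_iff_le
    _ ↔ y ∈ ψ '' C := by rw [ofPoint_le_iff, ψ.image_eq_preimage_symm]; rfl

end XCal

/-- Every homeomorphism `Ψ : 𝒳(X₁) → 𝒳(X₂)` is of the form `𝒳(ψ)`
for a unique homeomorphism `ψ : X₁ → X₂`; in particular `Ψ ∘ φ₁ = φ₂ ∘ ψ`. -/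
theorem stmt15 {X₁ X₂ : Type*} [TopologicalSpace X₁] [TopologicalSpace X₂]
    (hX₁ : IsSpectralSpace X₁) (hX₂ : IsSpectralSpace X₂)
    (Ψ : XCal X₁ → XCal X₂) (hΨ : IsHomeomorph Ψ) :
    ∃! ψ : X₁ → X₂, IsHomeomorph ψ ∧
      (∀ C : XCal X₁, (Ψ C : Set X₂) = genOf (ψ '' (C : Set X₁))) ∧
      (∀ (x : X₁) (C : XCal X₁),
        (C : Set X₁) = genOf {x} → (Ψ C : Set X₂) = genOf {ψ x}) := by
  obtain ⟨e, rfl⟩ := isHomeomorph_iff_exists_homeomorph.1 hΨ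
  have := hX₁.spectralSpace
  have := hX₂.spectralSpace
  obtain ⟨ψ, hψ⟩ := XCal.isEmbedding_ofPoint.exists_homeomorph_of_image_range_eq
    XCal.isEmbedding_ofPoint e (XCal.image_range_ofPoint e)
  refine ⟨ψ, ⟨ψ.isHomeomorph, fun C => ?_, fun x C hC => ?_⟩, ?_⟩
  · rw [← XCal.coe_apply_eq_image e ψ hψ, (e C).2.2.genOf_eq]
  · rw [show C = XCal.ofPoint x from Subtype.ext hC, ← hψ]
    rfl
  · rintro ψ₀ ⟨-, -, hψ₀⟩
    funext x
    refine XCal.isEmbedding_ofPoint.injective (Subtype.ext ?_)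
    rw [XCal.coe_ofPoint, ← hψ₀ x (XCal.ofPoint x) rfl, hψ]
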